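/- arXiv:2207.04454 — 2 statements merged into one kernel-verified Lean document; each statement's English description precedes it below -/
import Mathlib

section
/- Let $J \subseteq \mathbb{R}$ be any subset and assign to every $\theta \in J$ a positive number $\delta_\theta > 0$. Then the set $\partial J := \{\bar{\theta} \in J \mid \forall \theta \in J : \bar{\theta} \notin (\theta, \theta + \delta_\theta)\}$ of points of $J$ that lie in the interior of none of the intervals $(\theta, \theta + \delta_\theta)$, $\theta \in J$, is countable. -/
open Set

/- For boundary points `a ≠ b` neither lies in the other's interval, so the intervals
`(a, a + δ a)` they start are pairwise disjoint; a disjoint family of nonempty open sets in the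
separable space `ℝ` is countable. -/

theorem Set.Ioo_disjoint_Ioo_of_notMem {α : Type*} [LinearOrder α] {a b c d : α}
    (hab : a ≠ b) (ha : a ∉ Ioo b d) (hb : b ∉ Ioo a c) : Disjoint (Ioo a c) (Ioo b d) := by
  rcases hab.lt_or_gt with hlt | hgt
  · have hcb : c ≤ b := not_lt.1 fun hbc => hb ⟨hlt, hbc⟩
    exact disjoint_left.2 fun x hx hx' => (hx.2.trans_le hcb).not_gt hx'.1
  · have hda : d ≤ a := not_lt.1 fun had => ha ⟨hgt, had⟩
    exact disjoint_left.2 fun x hx hx' => (hx'.2.trans_le hda).not_gt hx.1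

/-- The set of points of `J` lying in none of the open intervals
`(θ, θ + δ θ)`, `θ ∈ J`, is countable. -/
theorem countable_boundary_points
    (J : Set ℝ) (δ : ℝ → ℝ) (hδ : ∀ θ ∈ J, 0 < δ θ) :
    Set.Countable {θ' ∈ J | ∀ θ ∈ J, θ' ∉ Set.Ioo θ (θ + δ θ)} := by
  refine PairwiseDisjoint.countable_of_isOpen (s := fun θ => Ioo θ (θ + δ θ))
    (fun a ha b hb hab => Ioo_disjoint_Ioo_of_notMem hab (ha.2 b hb.1) (hb.2 a ha.1))
    (fun _ _ => isOpen_Ioo) (fun θ hθ => nonempty_Ioo.2 ?_)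
  exact lt_add_of_pos_right θ (hδ θ hθ.1)
end

section
/- Fix $\tau > 0$ and $\nu > 0$. Let $f^- : \mathbb{R}_{\geq 0} \to \mathbb{R}_{\geq 0}$ be locally integrable with cumulative function $F^-(\theta) = \int_0^\theta f^-(\zeta)\,d\zeta$, and let $F^+ : \mathbb{R}_{\geq 0} \to \mathbb{R}_{\geq 0}$ satisfy $F^-(\theta + \tau) \leq F^+(\theta)$ for all $\theta \geq 0$. Define the queue length $q(\theta) = F^+(\theta) - F^-(\theta + \tau)$ and the exit time $T(\theta) = \theta + \tau + q(\theta)/\nu$. Suppose $F^-(T(\theta)) = F^+(\theta)$ for all $\theta \geq 0$ and $f^-(\theta + \tau) \leq \nu$ for almost all $\theta \geq 0$. Then for every $\theta \geq 0$, $q(\theta)/\nu = \min\{w \geq 0 \mid \int_\theta^{\theta + w} f^-(\zeta + \tau)\,d\zeta = q(\theta)\}$; that is, $w = q(\theta)/\nu$ satisfies $\int_\theta^{\theta + w} f^-(\zeta + \tau)\,d\zeta = q(\theta)$ and no smaller $w \geq 0$ does. -/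
/-!
After the shift by `τ`, the integral over `[θ, θ + w]` is `F⁻(θ + w + τ) - F⁻(θ + τ)`; at
`w = q(θ)/ν` this is `F⁻(T θ) - F⁻(θ + τ) = q(θ)` by the transfer equation. Conversely the
capacity bound gives `∫_θ^{θ+w} f⁻(ζ + τ) dζ ≤ ν w`, so every admissible `w` has `q(θ) ≤ ν w`.
-/

open MeasureTheory intervalIntegral

theorem MeasureTheory.LocallyIntegrableOn.intervalIntegrable_of_Ici {E : Type*}
    [NormedAddCommGroup E] {f : ℝ → E} {a b c : ℝ} (hf : LocallyIntegrableOn f (Set.Ici a)) (hb : a ≤ b) (hc : a ≤ c) :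
    IntervalIntegrable f volume b c :=
  (hf.integrableOn_compact_subset (fun _ hx => (le_min hb hc).trans hx.1)
    isCompact_uIcc).intervalIntegrable

theorem intervalIntegral.integral_le_mul_sub_of_ae_le {f : ℝ → ℝ} {a b C : ℝ} (hab : a ≤ b)
    (hf : IntervalIntegrable f volume a b) (hC : ∀ᵐ x ∂volume.restrict (Set.Icc a b), f x ≤ C) :
    ∫ x in a..b, f x ≤ C * (b - a) := by
  simpa [mul_comm] using integral_mono_ae_restrict hab hf intervalIntegrable_const hC

theorem waiting_time_isLeast_general
    (τ ν : ℝ) (hτ : 0 < τ) (hν : 0 < ν)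
    (fm : ℝ → ℝ)
    (hfm_loc : LocallyIntegrableOn fm (Set.Ici (0:ℝ)))
    (Fp Fm q T : ℝ → ℝ)
    (hFm : ∀ θ, Fm θ = ∫ ζ in (0:ℝ)..θ, fm ζ)
    (hweak : ∀ θ ≥ (0:ℝ), Fm (θ + τ) ≤ Fp θ)
    (hq : ∀ θ, q θ = Fp θ - Fm (θ + τ))
    (hT : ∀ θ, T θ = θ + τ + q θ / ν)
    (htransfer : ∀ θ ≥ (0:ℝ), Fm (T θ) = Fp θ)
    (hcap : ∀ᵐ θ ∂(volume.restrict (Set.Ici (0:ℝ))), fm (θ + τ) ≤ ν) :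
    ∀ θ ≥ (0:ℝ),
      IsLeast {w : ℝ | 0 ≤ w ∧ (∫ ζ in θ..(θ + w), fm (ζ + τ)) = q θ}
        (q θ / ν) := by
  intro θ hθ
  have hshift {w : ℝ} (hw : 0 ≤ w) :
      ∫ ζ in θ..(θ + w), fm (ζ + τ) = Fm (θ + w + τ) - Fm (θ + τ) := by
    rw [integral_comp_add_right, hFm, hFm, integral_interval_sub_left
      (hfm_loc.intervalIntegrable_of_Ici le_rfl (by linarith))
      (hfm_loc.intervalIntegrable_of_Ici le_rfl (by linarith))]
  have hwait : 0 ≤ q θ / ν := div_nonneg (by linarith [hq θ, hweak θ hθ]) hν.le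
  refine ⟨⟨hwait, ?_⟩, fun w ⟨hw, hw_int⟩ => ?_⟩
  · rw [hshift hwait, show θ + q θ / ν + τ = T θ by rw [hT]; ring, htransfer θ hθ, hq]
  · have hcap_w : ∀ᵐ ζ ∂volume.restrict (Set.Icc θ (θ + w)), fm (ζ + τ) ≤ ν :=
      ae_restrict_of_ae_restrict_of_subset (fun _ hζ => hθ.trans hζ.1) hcap
    have hshifted : IntervalIntegrable (fun ζ => fm (ζ + τ)) volume θ (θ + w) := by
      simpa using (hfm_loc.intervalIntegrable_of_Ici (b := θ + τ) (c := θ + w + τ)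
        (by linarith) (by linarith)).comp_add_right τ
    have hbound := integral_le_mul_sub_of_ae_le (by linarith) hshifted hcap_w
    rw [div_le_iff₀ hν]
    linarith

/-- In the Vickrey queueing model: if the link transfer equation holds and the
outflow respects the capacity `ν`, then the waiting time `q(θ)/ν` is the least
`w ≥ 0` with `∫_θ^{θ+w} f⁻(ζ+τ) dζ = q(θ)`. -/
theorem waiting_time_isLeast
    (τ ν : ℝ) (hτ : 0 < τ) (hν : 0 < ν)
    (fm : ℝ → ℝ) (hfm_nonneg : ∀ θ ≥ (0:ℝ), 0 ≤ fm θ)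
    (hfm_loc : LocallyIntegrableOn fm (Set.Ici (0:ℝ)))
    (Fp Fm q T : ℝ → ℝ)
    (hFm : ∀ θ, Fm θ = ∫ ζ in (0:ℝ)..θ, fm ζ)
    (hFp_nonneg : ∀ θ ≥ (0:ℝ), 0 ≤ Fp θ)
    (hweak : ∀ θ ≥ (0:ℝ), Fm (θ + τ) ≤ Fp θ)
    (hq : ∀ θ, q θ = Fp θ - Fm (θ + τ))
    (hT : ∀ θ, T θ = θ + τ + q θ / ν)
    (htransfer : ∀ θ ≥ (0:ℝ), Fm (T θ) = Fp θ)
    (hcap : ∀ᵐ θ ∂(volume.restrict (Set.Ici (0:ℝ))), fm (θ + τ) ≤ ν) :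
    ∀ θ ≥ (0:ℝ),
      IsLeast {w : ℝ | 0 ≤ w ∧ (∫ ζ in θ..(θ + w), fm (ζ + τ)) = q θ}
        (q θ / ν) :=
  waiting_time_isLeast_general τ ν hτ hν fm hfm_loc Fp Fm q T hFm hweak hq hT htransfer hcap
end
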